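/- arXiv:2109.03360 — 9 statements merged into one kernel-verified Lean document; each statement's English description precedes it below -/
import Mathlib

section
/- If p is a real polynomial such that p(A) is entrywise nonnegative for every entrywise nonnegative n-by-n real matrix A, then for each r in {0,...,n-1} and every real t ≥ 0, p_{(r,n)}(t) ≥ 0. -/
open Polynomial Matrix

/-- `Pn n p` means the real polynomial `p` preserves entrywise nonnegativity of all
`n`-by-`n` nonnegative real matrices. -/
def Pn (n : ℕ) (p : Polynomial ℝ) : Prop :=
  ∀ A : Matrix (Fin n) (Fin n) ℝ, (∀ i j, 0 ≤ A i j) →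
    ∀ i j, 0 ≤ ((Polynomial.aeval A) p) i j

/-- The `r mod n`-part of a real polynomial. -/
noncomputable def rpart (p : Polynomial ℝ) (n r : ℕ) : Polynomial ℝ :=
  ∑ j ∈ Finset.range (p.natDegree + 1),
    if j % n = r then Polynomial.C (p.coeff j) * Polynomial.X ^ j else 0

/-! Apply the hypothesis to `A = t • S`, where `S` is the cyclic shift on `Fin n`. Then `A ^ j` is
`t ^ j` times the shift by `j`, so the `(r, 0)` entry of `A ^ j` is `t ^ j` when `j ≡ r [MOD n]`
and `0` otherwise, and the `(r, 0)` entry of `p(A)` is exactly `p_{(r,n)}(t)`. -/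

namespace Matrix

variable {ι α : Type*} [Fintype ι] [DecidableEq ι] [AddGroup ι] [Semiring α]

theorem circulant_single_mul_circulant_single (a b : ι) (x y : α) :
    circulant (Pi.single a x) * circulant (Pi.single b y) =
      circulant (Pi.single (a + b) (x * y)) := by
  rw [circulant_mul, mulVec_single]
  congr 1
  ext i
  by_cases h : i = a + b
  · simp [h]
  · simp [h, sub_eq_iff_eq_add]

theorem circulant_single_pow (a : ι) (x : α) (j : ℕ) :
    circulant (Pi.single a x) ^ j = circulant (Pi.single (j • a) (x ^ j)) := by
  induction j with
  | zero => simp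
  | succ j ih => rw [pow_succ, ih, circulant_single_mul_circulant_single, succ_nsmul, pow_succ]

open Fin.NatCast in
theorem circulant_single_one_pow_apply_zero {n : ℕ} [NeZero n] (t : α) (j r : ℕ) (hr : r < n) :
    (circulant (Pi.single 1 t : Fin n → α) ^ j) ⟨r, hr⟩ 0 = if j % n = r then t ^ j else 0 := by
  rw [circulant_single_pow, circulant_col_zero_eq, nsmul_one, Pi.single_apply]
  congr 1
  simp [Fin.ext_iff, Fin.val_natCast, eq_comm]

end Matrix

theorem Polynomial.aeval_matrix_apply {ι R : Type*} [Fintype ι] [DecidableEq ι] [CommSemiring R]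
    (p : R[X]) (M : Matrix ι ι R) (i k : ι) :
    aeval M p i k = ∑ j ∈ Finset.range (p.natDegree + 1), p.coeff j * (M ^ j) i k := by
  simp [aeval_eq_sum_range, Matrix.sum_apply]

theorem eval_rpart (p : ℝ[X]) (n r : ℕ) (t : ℝ) :
    (rpart p n r).eval t =
      ∑ j ∈ Finset.range (p.natDegree + 1), p.coeff j * if j % n = r then t ^ j else 0 := by
  simp only [rpart, eval_finsetSum]
  refine Finset.sum_congr rfl fun j _ => ?_
  split_ifs <;> simp

theorem stmt_4 (n : ℕ) (p : Polynomial ℝ) (hp : Pn n p) (r : ℕ) (hr : r < n)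
    (t : ℝ) (ht : 0 ≤ t) : 0 ≤ (rpart p n r).eval t := by
  have : NeZero n := ⟨by omega⟩
  have hA : ∀ i j, 0 ≤ circulant (Pi.single 1 t : Fin n → ℝ) i j :=
    fun i j => (Pi.single_nonneg.2 ht : (0 : Fin n → ℝ) ≤ Pi.single 1 t) (i - j)
  simpa only [aeval_matrix_apply, circulant_single_one_pow_apply_zero, eval_rpart]
    using hp _ hA ⟨r, hr⟩ 0
end

section
/- If p ∈ 𝒫_n (i.e., p preserves entrywise nonnegativity of all n-by-n nonnegative real matrices), then for every r in {0,...,n-1}, the sum of the coefficients a_k of p over indices k ≡ r (mod n) is nonnegative. -/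
open Polynomial Matrix

/-!
Evaluate `p` at the cyclic shift matrix `S`. Since `S ^ k` has its `(0, j)` entry equal to `1`
exactly when `j ≡ k (mod n)`, the `(0, r)` entry of `p(S)` is the sum of the coefficients `a_k`
with `k ≡ r (mod n)`; it is nonnegative because `S` is.
-/

open Fin.NatCast

section CyclicShift

variable (R : Type*) (n : ℕ) [NeZero n]

def cyclicShift [Zero R] [One R] : Matrix (Fin n) (Fin n) R :=
  Matrix.of fun i j => if j = i + 1 then 1 else 0

variable {R n}

lemma cyclicShift_nonneg [Semiring R] [PartialOrder R] [ZeroLEOneClass R] (i j : Fin n) :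
    0 ≤ cyclicShift R n i j := by
  rw [cyclicShift, of_apply]
  split_ifs <;> simp

lemma cyclicShift_pow_apply [Semiring R] (k : ℕ) (i j : Fin n) :
    (cyclicShift R n ^ k) i j = if j = i + k then 1 else 0 := by
  induction k generalizing j with
  | zero => simp [Matrix.one_apply, eq_comm]
  | succ k ih =>
    rw [pow_succ, Matrix.mul_apply, Finset.sum_eq_single (i + k)]
    · rw [ih]
      simp [cyclicShift, add_assoc]
    · intro b _ hb
      simp [ih, hb]
    · simp

lemma aeval_cyclicShift_apply [CommSemiring R] (p : R[X]) (i j : Fin n) :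
    aeval (cyclicShift R n) p i j =
      ∑ k ∈ Finset.range (p.natDegree + 1), if j = i + k then p.coeff k else 0 := by
  simp [aeval_eq_sum_range, Matrix.sum_apply, cyclicShift_pow_apply]

end CyclicShift

theorem stmt_5 (n : ℕ) (p : Polynomial ℝ) (hp : Pn n p) (r : ℕ) (hr : r < n) :
    0 ≤ ∑ k ∈ Finset.range (p.natDegree + 1), if k % n = r then p.coeff k else 0 := by
  have : NeZero n := ⟨by omega⟩
  have h := hp (cyclicShift ℝ n) cyclicShift_nonneg 0 ⟨r, hr⟩
  rw [aeval_cyclicShift_apply] at h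
  convert h using 3 with k
  simp [Fin.ext_iff, Fin.val_natCast, eq_comm]
end

section
/- If p ∈ 𝒫_n and deg p ≥ n - 1, then the first n coefficients a_0, a_1, ..., a_{n-1} of p are all nonnegative; if deg p < n - 1, then all coefficients of p are nonnegative. -/
open Polynomial Matrix

/-- Powers of the nilpotent Jordan block (shift matrix). -/
lemma shift_pow (n m : ℕ) (i j : Fin n) :
    ((Matrix.of fun i j : Fin n => if (i:ℕ)+1 = (j:ℕ) then (1:ℝ) else 0) ^ m) i j
      = if (i:ℕ) + m = (j:ℕ) then 1 else 0 := by
  induction m generalizing j with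
  | zero => simp [Matrix.one_apply, Fin.ext_iff]
  | succ m ih =>
    rw [pow_succ, Matrix.mul_apply]
    by_cases h : (i:ℕ) + m < n
    · rw [Finset.sum_eq_single (⟨(i:ℕ)+m, h⟩ : Fin n)]
      · simp [ih, Matrix.of_apply, add_assoc]
      · intro b _ hb
        rw [ih]
        have : ¬((i:ℕ) + m = (b:ℕ)) := fun hc => hb (by simp [Fin.ext_iff, hc.symm])
        simp [this]
      · simp
    · have : ∀ b : Fin n, ¬((i:ℕ) + m = (b:ℕ)) := fun b hc => h (hc ▸ b.isLt)
      have h2 : ¬((i:ℕ) + (m+1) = (j:ℕ)) := fun hc => h (by omega)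
      simp [ih, this, h2]

/-- If `p ∈ 𝒫_n` then the first `n` coefficients of `p` are nonnegative. -/
lemma key (n : ℕ) (p : Polynomial ℝ) (hp : Pn n p) (k : ℕ) (hk : k < n) :
    0 ≤ p.coeff k := by
  by_cases hkd : k ≤ p.natDegree
  · have hn : 0 < n := lt_of_le_of_lt (Nat.zero_le k) hk
    set J : Matrix (Fin n) (Fin n) ℝ :=
      Matrix.of fun i j : Fin n => if (i:ℕ)+1 = (j:ℕ) then (1:ℝ) else 0 with hJdef
    have hJ : ∀ i j, 0 ≤ J i j := by
      intro i j; rw [hJdef]; dsimp; split <;> norm_num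
    have h := hp J hJ ⟨0, hn⟩ ⟨k, hk⟩
    rw [Polynomial.aeval_eq_sum_range] at h
    rw [Matrix.sum_apply] at h
    have heq : ∀ m ∈ Finset.range (p.natDegree + 1),
        (p.coeff m • J ^ m) (⟨0, hn⟩ : Fin n) (⟨k, hk⟩ : Fin n)
          = if m = k then p.coeff m else 0 := by
      intro m _
      rw [Matrix.smul_apply, hJdef, shift_pow]
      simp [eq_comm]
    rw [Finset.sum_congr rfl heq, Finset.sum_ite_eq' (Finset.range (p.natDegree+1))] at h
    simpa [Finset.mem_range, Nat.lt_succ_iff, hkd] using h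
  · rw [p.coeff_eq_zero_of_natDegree_lt (not_le.mp hkd)]

theorem stmt_7 (n : ℕ) (p : Polynomial ℝ) (hp : Pn n p) :
    (n - 1 ≤ p.natDegree → ∀ k < n, 0 ≤ p.coeff k) ∧
    (p.natDegree < n - 1 → ∀ k, 0 ≤ p.coeff k) := by
  refine ⟨fun _ k hk => key n p hp k hk, fun hd k => ?_⟩
  by_cases hk : k < n
  · exact key n p hp k hk
  · exact le_of_eq (p.coeff_eq_zero_of_natDegree_lt (by omega)).symm
end

section
/- If p ∈ 𝒫_n, then p and its derivatives p', p'', ..., p^{(n-1)} are all nonnegative functions on [0, ∞), i.e., p^{(k)}(t) ≥ 0 for all t ≥ 0 and all 0 ≤ k ≤ n-1. -/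
open Polynomial Matrix

/-- The nilpotent shift matrix. -/
def Nmat (n : ℕ) : Matrix (Fin n) (Fin n) ℝ :=
  Matrix.of fun i j => if (j : ℕ) = (i : ℕ) + 1 then 1 else 0

lemma Nmat_pow (n m : ℕ) (i j : Fin n) :
    ((Nmat n) ^ m) i j = if (j : ℕ) = (i : ℕ) + m then 1 else 0 := by
  induction m generalizing i j with
  | zero => simp [Matrix.one_apply, Fin.ext_iff, eq_comm]
  | succ m ih =>
    rw [pow_succ, Matrix.mul_apply]
    have hterm : ∀ x : Fin n, ((Nmat n) ^ m) i x * (Nmat n) x j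
        = if ((x : ℕ) = (i : ℕ) + m ∧ (j : ℕ) = (x : ℕ) + 1) then 1 else 0 := by
      intro x
      rw [ih, Nmat]
      simp only [Matrix.of_apply]
      split_ifs <;> simp_all
    simp only [hterm]
    by_cases hj : (j : ℕ) = (i : ℕ) + (m + 1)
    · have hx : (i : ℕ) + m < n := by omega
      rw [Finset.sum_eq_single (⟨(i : ℕ) + m, hx⟩ : Fin n)]
      · simp [hj]; omega
      · intro b _ hb
        rw [if_neg]
        rintro ⟨h1, -⟩
        exact hb (Fin.ext h1)
      · simp
    · rw [if_neg hj, Finset.sum_eq_zero]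
      intro x _
      rw [if_neg]
      rintro ⟨h1, h2⟩
      omega

theorem stmt_8 (n : ℕ) (p : Polynomial ℝ) (hp : Pn n p) :
    ∀ k < n, ∀ t : ℝ, 0 ≤ t → 0 ≤ ((Polynomial.derivative)^[k] p).eval t := by
  intro k hk t ht
  have hn : 0 < n := lt_of_le_of_lt (Nat.zero_le k) hk
  set N := Nmat n with hN
  set A : Matrix (Fin n) (Fin n) ℝ := t • (1 : Matrix (Fin n) (Fin n) ℝ) + N with hA
  have hAnn : ∀ i j, 0 ≤ A i j := by
    intro i j
    have h1 : (0:ℝ) ≤ t • (1 : Matrix (Fin n) (Fin n) ℝ) i j := by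
      simp [Matrix.one_apply]
      split_ifs <;> simp [ht]
    have h2 : (0:ℝ) ≤ N i j := by
      rw [hN, Nmat]; simp only [Matrix.of_apply]; split_ifs <;> norm_num
    simpa [hA] using add_nonneg h1 h2
  set q := taylor t p with hq
  have hAeq : aeval A p = aeval N q := by
    rw [hq, taylor_apply, aeval_comp]
    have h : aeval N (X + C t) = A := by
      rw [map_add, aeval_X, aeval_C, Algebra.algebraMap_eq_smul_one, hA, add_comm]
    rw [h]
  set i0 : Fin n := ⟨0, hn⟩
  set jk : Fin n := ⟨k, hk⟩
  have hentry : (aeval N q) i0 jk = q.coeff k := by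
    rw [aeval_eq_sum_range]
    have : (∑ i ∈ Finset.range (q.natDegree + 1), q.coeff i • N ^ i) i0 jk
        = ∑ i ∈ Finset.range (q.natDegree + 1), q.coeff i * (N ^ i) i0 jk := by
      simp [Matrix.sum_apply]
    rw [this]
    have hterm : ∀ i, q.coeff i * (N ^ i) i0 jk = if k = i then q.coeff i else 0 := by
      intro i
      rw [hN, Nmat_pow]
      simp only [i0, jk]
      split_ifs with h1 h2 h2 <;> simp_all
    simp only [hterm]
    rw [Finset.sum_ite_eq]
    split_ifs with h
    · rfl
    · rw [coeff_eq_zero_of_natDegree_lt]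
      simp at h; omega
  have hnn : 0 ≤ q.coeff k := by
    rw [← hentry, ← hAeq]
    exact hp A hAnn i0 jk
  have hcoeff : q.coeff k = (hasseDeriv k p).eval t := taylor_coeff (r := t) (f := p) k
  have hfact : derivative^[k] p = k.factorial • (hasseDeriv k p) := by
    have h := Polynomial.factorial_smul_hasseDeriv (R := ℝ) (k := k)
    simpa using (congrFun h p).symm
  rw [hfact]
  have heval : (k.factorial • (hasseDeriv k p)).eval t
      = (k.factorial : ℝ) * (hasseDeriv k p).eval t := by
    simp [nsmul_eq_mul]
  rw [heval]
  have h1 : (0:ℝ) ≤ (hasseDeriv k p).eval t := by rw [← hcoeff]; exact hnn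
  positivity
end

section
/- If p ∈ ℝ[x] has degree less than 2n, then p ∈ 𝒫_n if and only if all of the coefficients of p are nonnegative. -/
/-!
The nonnegative-coefficient polynomials are in `Pn n` since powers of a nonnegative matrix are
nonnegative. Conversely, let `C_s` be the cyclic shift on `Fin n` whose wrap-around edge has
weight `s ≥ 0`, so that `(C_s ^ m) 0 j = s ^ (m / n)` if `j = m % n` and `0` otherwise. When
`deg p < 2n`, the `(0, r)` entry of `p(C_s)` is therefore `p_r + p_{n+r} s`, and its
nonnegativity for all `s ≥ 0` forces `p_r ≥ 0` and `p_{n+r} ≥ 0`.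
-/

open Polynomial Matrix

section CyclicShift

variable {R : Type*}

def cycShift [Zero R] [One R] (n : ℕ) (s : R) : Matrix (Fin n) (Fin n) R :=
  fun i j => if ((i : ℕ) + 1) % n = j then (if (i : ℕ) + 1 = n then s else 1) else 0

lemma cycShift_apply_nonneg [Semiring R] [PartialOrder R] [IsOrderedRing R] {n : ℕ} {s : R}
    (hs : 0 ≤ s) (i j : Fin n) : 0 ≤ cycShift n s i j := by
  unfold cycShift
  split_ifs <;> simp [hs]

lemma cycShift_pow_zero_apply [Semiring R] {n : ℕ} [NeZero n] (s : R) (m : ℕ) (j : Fin n) :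
    (cycShift n s ^ m) 0 j = if m % n = j then s ^ (m / n) else 0 := by
  induction m generalizing j with
  | zero => simp [one_apply, Fin.ext_iff]
  | succ m ih =>
    have hn := NeZero.pos n
    rw [pow_succ, mul_apply, Finset.sum_eq_single ⟨m % n, Nat.mod_lt _ hn⟩
      (fun k _ hk => by rw [ih, if_neg (fun h => hk (Fin.ext h.symm)), zero_mul])
      (fun h => absurd (Finset.mem_univ _) h), ih, if_pos rfl]
    have hdiv : (m + 1) / n = m / n + if m % n + 1 = n then 1 else 0 := by
      conv_lhs => rw [← Nat.div_add_mod m n, add_assoc, Nat.mul_add_div hn]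
      split_ifs with hwrap
      · rw [hwrap, Nat.div_self hn]
      · rw [Nat.div_eq_of_lt (show m % n + 1 < n by have := Nat.mod_lt m hn; omega)]
    simp only [cycShift, Nat.mod_add_mod, hdiv]
    split_ifs <;> simp [pow_succ]

lemma aeval_cycShift_zero_apply [CommSemiring R] {n : ℕ} [NeZero n] (s : R) {p : R[X]}
    (hp : p.natDegree < 2 * n) {r : ℕ} (hr : r < n) :
    aeval (cycShift n s) p 0 ⟨r, hr⟩ = p.coeff r + p.coeff (n + r) * s := by
  have hn := NeZero.pos n
  have hfiber : ∀ m < 2 * n, m % n = r → m = r ∨ m = n + r := by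
    intro m hm hmr
    rcases lt_or_ge m n with h | h
    · rw [Nat.mod_eq_of_lt h] at hmr; omega
    · rw [Nat.mod_eq_sub_mod h, Nat.mod_eq_of_lt (by omega)] at hmr; omega
  rw [aeval_eq_sum_range' hp, Matrix.sum_apply]
  simp only [Matrix.smul_apply, cycShift_pow_zero_apply, smul_eq_mul]
  rw [Finset.sum_eq_add r (n + r) (by omega)]
  · simp [Nat.mod_eq_of_lt hr, Nat.div_eq_of_lt hr, Nat.add_div_left _ hn]
  · rintro m hm ⟨hmr, hmnr⟩
    have : m % n ≠ r := fun h => (hfiber m (Finset.mem_range.1 hm) h).elim hmr hmnr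
    simp [this]
  all_goals exact fun h => absurd (Finset.mem_range.2 (by omega)) h

end CyclicShift

lemma nonneg_of_forall_nonneg_add_mul {K : Type*} [Field K] [LinearOrder K]
    [IsStrictOrderedRing K] {a b : K} (h : ∀ s, 0 ≤ s → 0 ≤ a + b * s) : 0 ≤ a ∧ 0 ≤ b := by
  have ha : 0 ≤ a := by simpa using h 0 le_rfl
  refine ⟨ha, le_of_not_gt fun hb => ?_⟩
  have := h ((a + 1) / -b) (div_nonneg (by linarith) (by linarith))
  rw [mul_div_assoc', div_neg, mul_div_cancel_left₀ _ hb.ne] at this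
  linarith

lemma Matrix.aeval_apply_nonneg {ι R : Type*} [Fintype ι] [DecidableEq ι] [CommSemiring R]
    [PartialOrder R] [IsOrderedRing R] {A : Matrix ι ι R} (hA : ∀ i j, 0 ≤ A i j) {p : R[X]}
    (hp : ∀ k, 0 ≤ p.coeff k) (i j : ι) : 0 ≤ aeval A p i j := by
  rw [aeval_eq_sum_range, Matrix.sum_apply]
  exact Finset.sum_nonneg fun m _ => mul_nonneg (hp m) (pow_apply_nonneg hA m i j)

lemma Pn.coeff_nonneg {n : ℕ} {p : ℝ[X]} (hP : Pn n p) (hd : p.natDegree < 2 * n) {r : ℕ}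
    (hr : r < n) : 0 ≤ p.coeff r ∧ 0 ≤ p.coeff (n + r) := by
  have : NeZero n := ⟨by omega⟩
  refine nonneg_of_forall_nonneg_add_mul fun s hs => ?_
  rw [← aeval_cycShift_zero_apply s hd hr]
  exact hP _ (cycShift_apply_nonneg hs) 0 ⟨r, hr⟩

theorem stmt_11 (n : ℕ) (p : Polynomial ℝ) (hd : p.natDegree < 2 * n) :
    Pn n p ↔ ∀ k, 0 ≤ p.coeff k := by
  refine ⟨fun hP k => ?_, fun hp A hA => aeval_apply_nonneg hA hp⟩
  rcases lt_or_ge p.natDegree k with hk | hk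
  · rw [coeff_eq_zero_of_natDegree_lt hk]
  rcases lt_or_ge k n with hkn | hkn
  · exact (hP.coeff_nonneg hd hkn).1
  · obtain ⟨r, rfl⟩ := Nat.exists_eq_add_of_le hkn
    exact (hP.coeff_nonneg hd (by omega)).2
end

section
/- The polynomial p(x) = x² - 4x + 4 = (x-2)² is nonnegative on all of ℝ (hence belongs to 𝒫_1), but p ∉ 𝒫_2: there exists an entrywise nonnegative 2-by-2 real matrix A such that p(A) has a negative entry. Consequently, 𝒫_2 is a proper subset of 𝒫_1. -/
open Polynomial Matrix

/-
Testing on the nonnegative scalar matrices `x • 1` shows that every member of `𝒫_n`, `n ≥ 1`,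
is nonnegative on `[0, ∞)`, and for `n = 1` that is all of `𝒫_1`. The polynomial `(x - 2)²` is
nonnegative everywhere, but at the swap matrix `A = !![0, 1; 1, 0]`, where `A² = 1`, it equals
`5 - 4A`, whose off-diagonal entries are `-4`.
-/

lemma Pn.eval_nonneg {n : ℕ} [NeZero n] {p : ℝ[X]} (hp : Pn n p) {x : ℝ} (hx : 0 ≤ x) :
    0 ≤ p.eval x := by
  have hxI : ∀ i j, 0 ≤ algebraMap ℝ (Matrix (Fin n) (Fin n) ℝ) x i j := by
    intro i j
    rw [algebraMap_matrix_apply]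
    split_ifs <;> simp [hx]
  simpa [aeval_algebraMap_apply_eq_algebraMap_eval, algebraMap_matrix_apply] using hp _ hxI 0 0

lemma pn_one_iff {p : ℝ[X]} : Pn 1 p ↔ ∀ x : ℝ, 0 ≤ x → 0 ≤ p.eval x := by
  refine ⟨fun hp _ hx => hp.eval_nonneg hx, fun hp A hA i j => ?_⟩
  have hA_scalar : A = algebraMap ℝ _ (A 0 0) := by
    ext i j
    simp [Subsingleton.elim i 0, Subsingleton.elim j 0, algebraMap_matrix_apply]
  rw [hA_scalar, aeval_algebraMap_apply_eq_algebraMap_eval]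
  simpa [Subsingleton.elim i j, algebraMap_matrix_apply] using hp _ (hA 0 0)

lemma setOf_pn_subset_pn_one (n : ℕ) [NeZero n] : {q | Pn n q} ⊆ {q | Pn 1 q} :=
  fun _ hq => pn_one_iff.mpr fun _ => hq.eval_nonneg

lemma aeval_swap_X_sub_C_sq (c : ℝ) :
    aeval !![(0 : ℝ), 1; 1, 0] ((X - C c) ^ 2) = !![1 + c ^ 2, -2 * c; -2 * c, 1 + c ^ 2] := by
  ext i j
  fin_cases i <;> fin_cases j <;> simp [sq, Matrix.mul_apply, algebraMap_matrix_apply] <;> ring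

theorem stmt_12 :
    (∀ x : ℝ, 0 ≤ (Polynomial.X ^ 2 - Polynomial.C 4 * Polynomial.X + Polynomial.C 4 :
        Polynomial ℝ).eval x) ∧
    (∃ A : Matrix (Fin 2) (Fin 2) ℝ, (∀ i j, 0 ≤ A i j) ∧
      ∃ i j, ((Polynomial.aeval A)
        (Polynomial.X ^ 2 - Polynomial.C 4 * Polynomial.X + Polynomial.C 4 :
          Polynomial ℝ)) i j < 0) ∧
    {q : Polynomial ℝ | Pn 2 q} ⊂ {q : Polynomial ℝ | Pn 1 q} := by
  set p : ℝ[X] := X ^ 2 - C 4 * X + C 4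
  have hp_sq : p = (X - C 2) ^ 2 := by
    simp only [p, map_ofNat]
    ring
  have hp_nonneg (x : ℝ) : 0 ≤ p.eval x := by
    rw [hp_sq, eval_pow]
    exact sq_nonneg _
  have hswap_nonneg : ∀ i j, 0 ≤ !![(0 : ℝ), 1; 1, 0] i j := by
    intro i j
    fin_cases i <;> fin_cases j <;> simp
  have hswap_neg : aeval !![(0 : ℝ), 1; 1, 0] p 0 1 < 0 := by
    rw [hp_sq, aeval_swap_X_sub_C_sq]
    norm_num
  refine ⟨hp_nonneg, ⟨_, hswap_nonneg, 0, 1, hswap_neg⟩, ?_⟩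
  refine (Set.ssubset_iff_of_subset (setOf_pn_subset_pn_one 2)).mpr ⟨p, ?_, ?_⟩
  · exact pn_one_iff.mpr fun x _ => hp_nonneg x
  · exact fun hp2 => hswap_neg.not_ge (hp2 _ hswap_nonneg 0 1)
end

section
/- If p ∈ 𝒫_n, then for every n̂ with 1 ≤ n̂ ≤ n and every r ∈ {0,...,n̂-1}, the residue-class part p_{(r,n̂)} is nonnegative on [0,∞). -/
open Polynomial Matrix

theorem stmt_15 (n : ℕ) (p : Polynomial ℝ) (hp : Pn n p) :
    ∀ nhat, 1 ≤ nhat → nhat ≤ n → ∀ r < nhat, ∀ t : ℝ, 0 ≤ t → 0 ≤ (rpart p nhat r).eval t := by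
  intro nhat h1 hle r hr t ht
  have hn : 0 < n := lt_of_lt_of_le h1 hle
  set A : Matrix (Fin n) (Fin n) ℝ := fun i j =>
    if (i : ℕ) < nhat ∧ (j : ℕ) < nhat ∧ (i : ℕ) = ((j : ℕ) + 1) % nhat then t else 0 with hA
  have hAnn : ∀ i j, 0 ≤ A i j := by
    intro i j
    rw [hA]
    dsimp only
    split
    · exact ht
    · exact le_refl 0
  have hpow : ∀ j : ℕ, ∀ i l : Fin n, (l : ℕ) < nhat →
      (A ^ j) i l = if (i : ℕ) < nhat ∧ (i : ℕ) = ((l : ℕ) + j) % nhat then t ^ j else 0 := by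
    intro j
    induction j with
    | zero =>
      intro i l hl
      have : ((l : ℕ) + 0) % nhat = (l : ℕ) := by simp [Nat.mod_eq_of_lt hl]
      rw [pow_zero, Matrix.one_apply, this]
      by_cases h : i = l
      · subst h
        simp [Nat.mod_eq_of_lt hl, hl]
      · have : ¬ ((i : ℕ) < nhat ∧ (i : ℕ) = (l : ℕ)) := by
          rintro ⟨-, h2⟩
          exact h (Fin.ext h2)
        simp [h, this]
    | succ j ih =>
      intro i l hl
      have hk : ((l : ℕ) + 1) % nhat < nhat := Nat.mod_lt _ h1
      set k : Fin n := ⟨((l : ℕ) + 1) % nhat, lt_of_lt_of_le hk hle⟩ with hkdef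
      rw [pow_succ, Matrix.mul_apply]
      have hsum : ∑ x : Fin n, (A ^ j) i x * A x l = (A ^ j) i k * A k l := by
        apply Finset.sum_eq_single k
        · intro b _ hb
          have : A b l = 0 := by
            rw [hA]; dsimp only
            rw [if_neg]
            rintro ⟨hb1, -, hb3⟩
            exact hb (Fin.ext (by simp [hkdef, hb3]))
          rw [this, mul_zero]
        · intro h; exact absurd (Finset.mem_univ k) h
      rw [hsum]
      have hAkl : A k l = t := by
        rw [hA]; dsimp only
        rw [if_pos ⟨hk, hl, rfl⟩]
      rw [hAkl, ih i k hk]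
      have harith : ((k : ℕ) + j) % nhat = ((l : ℕ) + (j + 1)) % nhat := by
        show (((l : ℕ) + 1) % nhat + j) % nhat = ((l : ℕ) + (j + 1)) % nhat
        conv_rhs => rw [show (l : ℕ) + (j + 1) = ((l : ℕ) + 1) + j by ring, Nat.add_mod ((l:ℕ)+1)]
        rw [Nat.add_mod, Nat.mod_mod_of_dvd _ dvd_rfl]
      rw [harith]
      split
      · rw [pow_succ]
      · rw [zero_mul]
  -- indices
  have hr' : r < n := lt_of_lt_of_le hr hle
  set iR : Fin n := ⟨r, hr'⟩
  set i0 : Fin n := ⟨0, hn⟩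
  have key := hp A hAnn iR i0
  rw [Polynomial.aeval_eq_sum_range] at key
  have hentry : (∑ j ∈ Finset.range (p.natDegree + 1), p.coeff j • A ^ j) iR i0
      = (rpart p nhat r).eval t := by
    rw [Matrix.sum_apply]
    rw [rpart, Polynomial.eval_finset_sum]
    apply Finset.sum_congr rfl
    intro j _
    rw [Matrix.smul_apply, hpow j iR i0 h1, smul_eq_mul]
    have h0j : ((i0 : ℕ) + j) % nhat = j % nhat := by simp [i0]
    rw [h0j]
    by_cases hjr : j % nhat = r
    · rw [if_pos hjr, if_pos ⟨hr, by simp [iR, hjr]⟩]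
      simp
    · rw [if_neg hjr, if_neg, mul_zero]
      · simp
      · rintro ⟨-, h2⟩
        exact hjr (by simp [iR] at h2; omega)
  rw [hentry] at key
  exact key
end

section
/- If p ∈ 𝒫_n, then for every n̂ with 1 ≤ n̂ ≤ n and every r ∈ {0,...,n̂-1}, the sum Σ_{k ≡ r (mod n̂)} a_k of the coefficients of p over each residue class mod n̂ is nonnegative. -/
/-!
Take the permutation matrix `P` of the cycle `(0 1 … n̂-1)` in `Fin n`; it is entrywise
nonnegative. Since `P ^ k` has its `(0, j)` entry equal to `1` exactly when `j = k mod n̂`,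
the `(0, r)` entry of `p(P)` is the sum of the coefficients `a_k` with `k ≡ r (mod n̂)`.
-/

open Polynomial Matrix

open Equiv

section PermMatrix

variable {ι R : Type*} [DecidableEq ι]

theorem Matrix.permMatrix_apply [Zero R] [One R] (σ : Perm ι) (i j : ι) :
    σ.permMatrix R i j = if σ i = j then 1 else 0 := by
  simp [eq_comm]

variable [Fintype ι]

theorem Matrix.permMatrix_pow [Semiring R] (σ : Perm ι) (k : ℕ) :
    (σ ^ k).permMatrix R = σ.permMatrix R ^ k := by
  induction k with
  | zero => simp
  | succ k ih => rw [pow_succ, permMatrix_mul, ih, pow_succ']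

theorem Matrix.aeval_permMatrix_apply [CommSemiring R] (p : R[X]) (σ : Perm ι) (i j : ι) :
    aeval (σ.permMatrix R) p i j =
      ∑ k ∈ Finset.range (p.natDegree + 1), if (σ ^ k) i = j then p.coeff k else 0 := by
  rw [aeval_eq_sum_range, Matrix.sum_apply]
  refine Finset.sum_congr rfl fun k _ => ?_
  rw [smul_apply, ← permMatrix_pow, permMatrix_apply, smul_eq_mul, mul_ite, mul_one, mul_zero]

end PermMatrix

theorem Fin.val_cycleRange_pow_apply_zero {n : ℕ} [NeZero n] (i : Fin n) (k : ℕ) :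
    ((cycleRange i ^ k) 0 : ℕ) = k % (i + 1) := by
  induction k with
  | zero => simp
  | succ k ih =>
    have hle : (cycleRange i ^ k) 0 ≤ i := by
      rw [Fin.le_def, ih]; exact Nat.le_of_lt_succ (Nat.mod_lt _ (Nat.succ_pos _))
    rw [pow_succ', Perm.mul_apply, coe_cycleRange_of_le hle]
    split_ifs with h
    · rw [Fin.ext_iff, ih] at h
      rw [← Nat.mod_add_mod, h, Nat.mod_self]
    · rw [Fin.ext_iff, ih] at h
      have hlt := Nat.mod_lt k (Nat.succ_pos i)
      rw [ih, ← Nat.mod_add_mod]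
      exact (Nat.mod_eq_of_lt (by omega)).symm

theorem stmt_16 (n : ℕ) (p : Polynomial ℝ) (hp : Pn n p) :
    ∀ nhat, 1 ≤ nhat → nhat ≤ n → ∀ r < nhat,
      0 ≤ ∑ k ∈ Finset.range (p.natDegree + 1), if k % nhat = r then p.coeff k else 0 := by
  intro nhat h1 hn r hr
  have : NeZero n := ⟨by omega⟩
  let σ := Fin.cycleRange (⟨nhat - 1, by omega⟩ : Fin n)
  have key := hp (σ.permMatrix ℝ) (fun i j => by rw [permMatrix_apply]; positivity) 0 ⟨r, by omega⟩
  rw [aeval_permMatrix_apply] at key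
  convert key using 3 with k
  rw [Fin.ext_iff, Fin.val_cycleRange_pow_apply_zero, Fin.val_mk, Fin.val_mk,
    Nat.sub_add_cancel h1]
end

section
/- If deg p > n and some coefficient a_{m-n+k} (1 ≤ k ≤ n, m = deg p) of p is negative, then setting r = (m-n+k) mod n, the residue-class part p_{(r,n)} has negative leading coefficient and hence p_{(r,n)}(t) < 0 for all sufficiently large real t. -/
open Polynomial

lemma coeff_rpart (p : Polynomial ℝ) (n r i : ℕ) :
    (rpart p n r).coeff i =
      if i % n = r ∧ i ≤ p.natDegree then p.coeff i else 0 := by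
  unfold rpart
  rw [Polynomial.finset_sum_coeff]
  simp only [apply_ite (fun q : Polynomial ℝ => q.coeff i), Polynomial.coeff_C_mul,
    Polynomial.coeff_X_pow, Polynomial.coeff_zero, mul_ite, mul_one, mul_zero]
  rw [Finset.sum_eq_single i]
  · by_cases h1 : i % n = r <;> by_cases h2 : i ≤ p.natDegree <;> simp [h1, h2] <;>
      exact Polynomial.coeff_eq_zero_of_natDegree_lt (Nat.lt_of_not_le h2)
  · intro j _ hj
    simp [Ne.symm hj]
  · intro hi
    simp only [Finset.mem_range, not_lt] at hi
    have : p.natDegree < i := by omega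
    simp [Nat.not_le.mpr this, Polynomial.coeff_eq_zero_of_natDegree_lt this]

theorem stmt_19 (n : ℕ) (p : Polynomial ℝ) (hd : n < p.natDegree)
    (k : ℕ) (hk1 : 1 ≤ k) (hkn : k ≤ n)
    (hneg : p.coeff (p.natDegree - n + k) < 0) :
    (rpart p n ((p.natDegree - n + k) % n)).leadingCoeff < 0 ∧
    ∃ T : ℝ, ∀ t : ℝ, T < t →
      (rpart p n ((p.natDegree - n + k) % n)).eval t < 0 := by
  set m := p.natDegree with hm
  set j0 := m - n + k with hj0
  set r := j0 % n with hr
  have hnm : n ≤ m := hd.le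
  have hj0le : j0 ≤ m := by omega
  have hcoeff : ∀ i, (rpart p n r).coeff i =
      if i % n = r ∧ i ≤ m then p.coeff i else 0 := fun i => coeff_rpart p n r i
  have hzero : ∀ i, j0 < i → (rpart p n r).coeff i = 0 := by
    intro i hi
    rw [hcoeff]
    split_ifs with h
    · exfalso
      obtain ⟨h1, h2⟩ := h
      have hmod : i % n = j0 % n := h1
      have : n ∣ i - j0 := (Nat.modEq_iff_dvd' hi.le).mp hmod.symm
      have hn0 : 0 < i - j0 := by omega
      have : n ≤ i - j0 := Nat.le_of_dvd hn0 this
      omega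
    · rfl
  have hj0coeff : (rpart p n r).coeff j0 = p.coeff j0 := by
    rw [hcoeff]; simp [hr, hj0le]
  have hdeg : (rpart p n r).natDegree = j0 := by
    apply le_antisymm
    · exact Polynomial.natDegree_le_iff_coeff_eq_zero.mpr hzero
    · apply Polynomial.le_natDegree_of_ne_zero
      rw [hj0coeff]; exact hneg.ne
  have hlead : (rpart p n r).leadingCoeff < 0 := by
    rw [Polynomial.leadingCoeff, hdeg, hj0coeff]; exact hneg
  refine ⟨hlead, ?_⟩
  have hdegpos : 0 < (rpart p n r).degree := by
    rw [Polynomial.degree_eq_natDegree (fun h => by simp [h] at hlead), hdeg]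
    exact_mod_cast (by omega : 0 < j0)
  have := Polynomial.tendsto_atBot_of_leadingCoeff_nonpos _ hdegpos hlead.le
  have hev := this.eventually (Filter.eventually_lt_atBot 0)
  rw [Filter.eventually_atTop] at hev
  obtain ⟨T, hT⟩ := hev
  exact ⟨T, fun t ht => hT t ht.le⟩
end
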